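/- Let n ≥ 1 and let β ∈ C₀^∞((0,∞)) with 0 ≤ β ≤ 1 and supp β ⊂ [1/2,2]. Set a(ξ,t) := cos((√3/2)|ξ|t) + (1/√3)sin((√3/2)|ξ|t) and, for j ∈ {−2,−1,0,1,2} and t, τ ≥ 0, define W_j(t,τ)f(x) := ∫_{ℝⁿ} e^{ix·ξ} e^{−|ξ|(t+τ)/2} a(ξ,t) a(ξ,τ) f̂(ξ) β(|ξ|/2^j)² dξ. Then for every integer k > n/2 there exists a constant C_k > 0 such that for all j ∈ {−2,…,2}, all t, τ ≥ 0, and all f ∈ L¹(ℝⁿ): ‖W_j(t,τ)f‖_{H^k(ℝⁿ)} ≤ C_k e^{−(t+τ)/16}‖f‖_{L¹(ℝⁿ)}. Consequently, for every σ > 0 there exists C_σ > 0 with ‖W_j(t,τ)f‖_{L^∞(ℝⁿ)} ≤ C_σ(1+|t−τ|)^{−σ}‖f‖_{L¹(ℝⁿ)} for all such j, t, τ, f. -/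

import Mathlib

noncomputable section

open MeasureTheory Set
open scoped ENNReal

abbrev Eu (n : ℕ) : Type := EuclideanSpace ℝ (Fin n)

/-- Fourier transform with the convention `f̂(ξ) = ∫ e^{-i x·ξ} f(x) dx`. -/
def FT {n : ℕ} (f : Eu n → ℂ) (ξ : Eu n) : ℂ :=
  ∫ x : Eu n, Complex.exp (-Complex.I * ((inner ℝ x ξ : ℝ) : ℂ)) * f x

/-- Inverse Fourier transform, `(2π)^{-n} ∫ e^{i x·ξ} f(ξ) dξ`. -/
def invFT {n : ℕ} (f : Eu n → ℂ) (x : Eu n) : ℂ :=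
  ((((2 * Real.pi) ^ n)⁻¹ : ℝ) : ℂ) *
    ∫ ξ : Eu n, Complex.exp (Complex.I * ((inner ℝ x ξ : ℝ) : ℂ)) * f ξ

/-- Square of the inhomogeneous Sobolev norm `‖f‖²_{H^s}`. -/
def sobNormSq (n : ℕ) (s : ℝ) (f : Eu n → ℂ) : ℝ :=
  ((2 * Real.pi) ^ n)⁻¹ * ∫ ξ : Eu n, (1 + ‖ξ‖ ^ 2) ^ s * ‖FT f ξ‖ ^ 2

def sobNorm (n : ℕ) (s : ℝ) (f : Eu n → ℂ) : ℝ := Real.sqrt (sobNormSq n s f)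

/-- Membership in the Sobolev space `H^s(ℝⁿ)`. -/
def MemSob (n : ℕ) (s : ℝ) (f : Eu n → ℂ) : Prop :=
  Integrable fun ξ : Eu n => (1 + ‖ξ‖ ^ 2) ^ s * ‖FT f ξ‖ ^ 2

/-- Square of the homogeneous Sobolev norm `‖f‖²_{Ḣ^s}`. -/
def homSobNormSq (n : ℕ) (s : ℝ) (f : Eu n → ℂ) : ℝ :=
  ((2 * Real.pi) ^ n)⁻¹ * ∫ ξ : Eu n, ‖ξ‖ ^ (2 * s) * ‖FT f ξ‖ ^ 2

def homSobNorm (n : ℕ) (s : ℝ) (f : Eu n → ℂ) : ℝ := Real.sqrt (homSobNormSq n s f)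

/-- Membership in the homogeneous Sobolev space `Ḣ^s(ℝⁿ)`. -/
def MemHomSob (n : ℕ) (s : ℝ) (f : Eu n → ℂ) : Prop :=
  Integrable fun ξ : Eu n => ‖ξ‖ ^ (2 * s) * ‖FT f ξ‖ ^ 2

/-- The symbol `e^{-rt/2}(cos((√3/2)rt) + (1/√3) sin((√3/2)rt))` of the cosine-type
viscous wave propagator. -/
def symbCos (r t : ℝ) : ℝ :=
  Real.exp (-(r * t) / 2) *
    (Real.cos (Real.sqrt 3 / 2 * r * t) + 1 / Real.sqrt 3 * Real.sin (Real.sqrt 3 / 2 * r * t))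

/-- The symbol `e^{-rt/2} sin((√3/2)rt)/((√3/2)r)` of the sine-type viscous wave propagator. -/
def symbSin (r t : ℝ) : ℝ :=
  Real.exp (-(r * t) / 2) * (Real.sin (Real.sqrt 3 / 2 * r * t) / (Real.sqrt 3 / 2 * r))

/-- Free evolution of data `(f, g)` under the linear viscous wave equation
`∂ₜₜu − Δu + √(−Δ)∂ₜu = 0`. -/
def freeEv {n : ℕ} (f g : Eu n → ℂ) (t : ℝ) (x : Eu n) : ℂ :=
  invFT (fun ξ => (symbCos ‖ξ‖ t : ℂ) * FT f ξ + (symbSin ‖ξ‖ t : ℂ) * FT g ξ) x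

/-- The propagator `S(t)`, the Fourier multiplier with symbol
`e^{−|ξ|t/2}·sin((√3/2)|ξ|t)/((√3/2)|ξ|)`. -/
def Sprop {n : ℕ} (t : ℝ) (φ : Eu n → ℂ) : Eu n → ℂ :=
  invFT fun ξ => (symbSin ‖ξ‖ t : ℂ) * FT φ ξ

/-- The Duhamel solution `u(t,·) = ∫₀^t S(t−τ)F(τ,·) dτ` of the inhomogeneous linear viscous
wave equation with zero initial data. -/
def duhamel {n : ℕ} (F : ℝ → Eu n → ℂ) (t : ℝ) (x : Eu n) : ℂ :=
  ∫ τ in (0:ℝ)..t, Sprop (t - τ) (F τ) x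

/-- Time derivative `∂ₜu`. -/
def tderiv {n : ℕ} (u : ℝ → Eu n → ℂ) (t : ℝ) (x : Eu n) : ℂ := deriv (fun τ => u τ x) t

/-- Mixed `L^q_t L^r_x` norm over a time set `s`. -/
def eLqLr {n : ℕ} (q r : ℝ≥0∞) (s : Set ℝ) (u : ℝ → Eu n → ℂ) : ℝ≥0∞ :=
  if q = ∞ then essSup (fun t => eLpNorm (u t) r volume) (volume.restrict s)
  else (∫⁻ t in s, eLpNorm (u t) r volume ^ q.toReal) ^ (1 / q.toReal)

/-- Partial derivative in the `i`-th coordinate direction. -/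
def pd {n : ℕ} (i : Fin n) (f : Eu n → ℂ) (x : Eu n) : ℂ :=
  fderiv ℝ f x (EuclideanSpace.single i (1:ℝ))

/-- Spatial Laplacian. -/
def lap {n : ℕ} (f : Eu n → ℂ) (x : Eu n) : ℂ := ∑ i : Fin n, pd i (fun y => pd i f y) x

/-- `√(−Δ)`, the Fourier multiplier with symbol `|ξ|`. -/
def sqrtLap {n : ℕ} (f : Eu n → ℂ) : Eu n → ℂ :=
  invFT fun ξ => (‖ξ‖ : ℂ) * FT f ξ

/-- `u ∈ C⁰([0,T]; H^s(ℝⁿ))`: membership in `H^s` at each time together with continuity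
in the `H^s` norm. -/
def ContSob (n : ℕ) (s : ℝ) (T : ℝ) (u : ℝ → Eu n → ℂ) : Prop :=
  (∀ t ∈ Icc (0:ℝ) T, MemSob n s (u t)) ∧
  ∀ t₀ ∈ Icc (0:ℝ) T, ∀ ε > 0, ∃ δ > 0, ∀ t ∈ Icc (0:ℝ) T,
    |t - t₀| < δ → sobNorm n s (fun x => u t x - u t₀ x) < ε

/-- `a(ξ,t) = cos((√3/2)|ξ|t) + (1/√3) sin((√3/2)|ξ|t)` as a function of `r = |ξ|`. -/
def aFun (r t : ℝ) : ℝ :=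
  Real.cos (Real.sqrt 3 / 2 * r * t) + 1 / Real.sqrt 3 * Real.sin (Real.sqrt 3 / 2 * r * t)

/-- The frequency-localized operator `W_j(t,τ) = U^{(j)}(t)(U^{(j)})^*(τ)`. -/
def Wop {n : ℕ} (β : ℝ → ℝ) (j : ℤ) (t τ : ℝ) (f : Eu n → ℂ) (x : Eu n) : ℂ :=
  ∫ ξ : Eu n, Complex.exp (Complex.I * ((inner ℝ x ξ : ℝ) : ℂ)) *
    ((Real.exp (-(‖ξ‖ * (t + τ)) / 2) * aFun ‖ξ‖ t * aFun ‖ξ‖ τ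
        * β (‖ξ‖ / 2 ^ j) ^ 2 : ℝ) : ℂ) * FT f ξ

/-! ### Auxiliary lemmas for the dispersive estimates -/

open scoped FourierTransform

section Aux

open Filter

/-- The full symbol of `W_j(t,τ)` as a function of `r = |ξ|`. -/
def Wsymb (β : ℝ → ℝ) (j : ℤ) (t τ : ℝ) (r : ℝ) : ℝ :=
  Real.exp (-(r * (t + τ)) / 2) * aFun r t * aFun r τ * β (r / 2 ^ j) ^ 2

lemma aFun_abs_le (r t : ℝ) : |aFun r t| ≤ 2 := by
  have h3 : (1:ℝ) ≤ Real.sqrt 3 := by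
    rw [show (1:ℝ) = Real.sqrt 1 by simp]
    exact Real.sqrt_le_sqrt (by norm_num)
  have h1 : |Real.cos (Real.sqrt 3 / 2 * r * t)| ≤ 1 := Real.abs_cos_le_one _
  have h2 : |Real.sin (Real.sqrt 3 / 2 * r * t)| ≤ 1 := Real.abs_sin_le_one _
  have h4 : |1 / Real.sqrt 3 * Real.sin (Real.sqrt 3 / 2 * r * t)| ≤ 1 := by
    rw [abs_mul]
    have h5 : |1 / Real.sqrt 3| ≤ 1 := by
      rw [abs_of_nonneg (by positivity), div_le_one (by linarith)]
      linarith
    calc |1 / Real.sqrt 3| * |Real.sin (Real.sqrt 3 / 2 * r * t)| ≤ 1 * 1 :=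
          mul_le_mul h5 h2 (abs_nonneg _) zero_le_one
      _ = 1 := by norm_num
  calc |aFun r t| ≤ |Real.cos (Real.sqrt 3 / 2 * r * t)|
        + |1 / Real.sqrt 3 * Real.sin (Real.sqrt 3 / 2 * r * t)| := abs_add_le _ _
    _ ≤ 2 := by linarith

lemma norm_exp_I_mul (r : ℝ) : ‖Complex.exp (Complex.I * (r : ℂ))‖ = 1 := by
  rw [Complex.norm_exp]
  simp [Complex.mul_re]

lemma norm_exp_neg_I_mul (r : ℝ) : ‖Complex.exp (-Complex.I * (r : ℂ))‖ = 1 := by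
  rw [Complex.norm_exp]
  simp [Complex.mul_re]

lemma norm_FT_le {n : ℕ} (f : Eu n → ℂ) (ξ : Eu n) : ‖FT f ξ‖ ≤ ∫ x : Eu n, ‖f x‖ := by
  refine (norm_integral_le_integral_norm _).trans (le_of_eq ?_)
  refine integral_congr_ae (Filter.Eventually.of_forall fun x => ?_)
  simp only [norm_mul, norm_exp_neg_I_mul, one_mul]

lemma supp_norm_bounds (β : ℝ → ℝ) (hβsupp : Function.support β ⊆ Icc (1/2 : ℝ) 2)
    {j : ℤ} (hj1 : -2 ≤ j) (hj2 : j ≤ 2) {r : ℝ} (hb : β (r / 2 ^ j) ≠ 0) :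
    1/8 ≤ r ∧ r ≤ 8 := by
  have hmem := hβsupp (Function.mem_support.2 hb)
  have hpos : (0:ℝ) < 2 ^ j := zpow_pos (by norm_num) j
  have hlow : (1/4 : ℝ) ≤ 2 ^ j := by
    calc (1/4 : ℝ) = 2 ^ (-2 : ℤ) := by norm_num
      _ ≤ 2 ^ j := zpow_le_zpow_right₀ one_le_two hj1
  have hhigh : (2:ℝ) ^ j ≤ 4 := by
    calc (2:ℝ) ^ j ≤ 2 ^ (2 : ℤ) := zpow_le_zpow_right₀ one_le_two hj2
      _ = 4 := by norm_num
  obtain ⟨h1, h2⟩ := hmem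
  rw [le_div_iff₀ hpos] at h1
  rw [div_le_iff₀ hpos] at h2
  constructor <;> nlinarith

lemma Wsymb_abs_le {n : ℕ} (β : ℝ → ℝ) (hβ01 : ∀ x, 0 ≤ β x ∧ β x ≤ 1)
    (hβsupp : Function.support β ⊆ Icc (1/2 : ℝ) 2)
    {j : ℤ} (hj1 : -2 ≤ j) (hj2 : j ≤ 2) {t τ : ℝ} (ht : 0 ≤ t) (hτ : 0 ≤ τ) (ξ : Eu n) :
    |Wsymb β j t τ ‖ξ‖| ≤ Set.indicator (Metric.closedBall (0 : Eu n) 8)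
      (fun _ => 4 * Real.exp (-(t + τ) / 16)) ξ := by
  by_cases hb : β (‖ξ‖ / 2 ^ j) = 0
  · have h0 : Wsymb β j t τ ‖ξ‖ = 0 := by simp [Wsymb, hb]
    rw [h0, abs_zero]
    exact Set.indicator_nonneg (fun _ _ => by positivity) ξ
  · obtain ⟨h18, h8⟩ := supp_norm_bounds β hβsupp hj1 hj2 hb
    have hmem : ξ ∈ Metric.closedBall (0 : Eu n) 8 := by
      rw [Metric.mem_closedBall, dist_zero_right]; exact h8
    rw [Set.indicator_of_mem hmem]
    have e1 : |Real.exp (-(‖ξ‖ * (t + τ)) / 2)| ≤ Real.exp (-(t + τ) / 16) := by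
      rw [abs_of_pos (Real.exp_pos _)]
      exact Real.exp_le_exp.2 (by nlinarith)
    have e2 : |aFun ‖ξ‖ t| ≤ 2 := aFun_abs_le _ _
    have e3 : |aFun ‖ξ‖ τ| ≤ 2 := aFun_abs_le _ _
    have e4 : |β (‖ξ‖ / 2 ^ j) ^ 2| ≤ 1 := by
      rw [abs_of_nonneg (sq_nonneg _)]
      exact pow_le_one₀ (hβ01 _).1 (hβ01 _).2
    calc |Wsymb β j t τ ‖ξ‖|
        = |Real.exp (-(‖ξ‖ * (t + τ)) / 2)| * |aFun ‖ξ‖ t| * |aFun ‖ξ‖ τ|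
            * |β (‖ξ‖ / 2 ^ j) ^ 2| := by
          rw [Wsymb, abs_mul, abs_mul, abs_mul]
      _ ≤ Real.exp (-(t + τ) / 16) * 2 * 2 * 1 := by
          gcongr <;> positivity
      _ = 4 * Real.exp (-(t + τ) / 16) := by ring

lemma exists_decay_bound (σ : ℝ) (hσ : 0 < σ) :
    ∃ K > 0, ∀ u : ℝ, 0 ≤ u → (1 + u) ^ σ * Real.exp (-u / 16) ≤ K := by
  have h := tendsto_rpow_mul_exp_neg_mul_atTop_nhds_zero σ (1/16) (by norm_num)
  have h1 : ∀ᶠ x in atTop, x ^ σ * Real.exp (-(1/16) * x) ≤ 1 :=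
    h.eventually_le_const one_pos
  obtain ⟨M, hM⟩ := eventually_atTop.1 h1
  set M' := max M 1 with hM'
  have hcont : ContinuousOn (fun x : ℝ => x ^ σ * Real.exp (-(1/16) * x)) (Icc 1 M') := by
    intro x hx
    have hx0 : x ≠ 0 := by have := hx.1; intro h0; rw [h0] at this; linarith
    exact ((Real.continuousAt_rpow_const x σ (Or.inl hx0)).mul
      ((Real.continuous_exp.comp (continuous_const.mul continuous_id)).continuousAt)).continuousWithinAt
  obtain ⟨C₀, hC₀⟩ := isCompact_Icc.exists_bound_of_continuousOn hcont
  have hmaxpos : (0:ℝ) < max C₀ 1 := lt_of_lt_of_le one_pos (le_max_right _ _)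
  refine ⟨max C₀ 1 * Real.exp (1/16), by positivity, fun u hu => ?_⟩
  have key : (1 + u) ^ σ * Real.exp (-(1/16) * (1 + u)) ≤ max C₀ 1 := by
    rcases le_total (1 + u) M' with hle | hle
    · have hmem : (1 + u) ∈ Icc (1:ℝ) M' := ⟨by linarith, hle⟩
      exact le_trans (le_abs_self _) (le_trans (hC₀ _ hmem) (le_max_left _ _))
    · have hM2 : M ≤ 1 + u := le_trans (le_max_left M 1) hle
      exact le_trans (hM _ hM2) (le_max_right _ _)
  calc (1 + u) ^ σ * Real.exp (-u / 16)
      = (1 + u) ^ σ * Real.exp (-(1/16) * (1 + u)) * Real.exp (1/16) := by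
        rw [mul_assoc, ← Real.exp_add]; congr 1; ring
    _ ≤ max C₀ 1 * Real.exp (1/16) := mul_le_mul_of_nonneg_right key (Real.exp_nonneg _)

lemma FT_eq_fourierIntegral {n : ℕ} (f : Eu n → ℂ) (ξ : Eu n) :
    FT f ξ = 𝓕 f ((2 * Real.pi)⁻¹ • ξ) := by
  rw [Real.fourier_eq']
  unfold FT
  congr 1; ext x
  rw [smul_eq_mul]
  congr 1
  have h1 : -2 * Real.pi * (inner ℝ x ((2 * Real.pi)⁻¹ • ξ) : ℝ) = -(inner ℝ x ξ : ℝ) := by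
    rw [real_inner_smul_right]
    have hπ : (2 * Real.pi) ≠ 0 := by positivity
    field_simp
  rw [h1]
  push_cast
  ring

lemma FT_continuous {n : ℕ} {f : Eu n → ℂ} (hf : Integrable f) : Continuous (FT f) := by
  have h𝓕 : Continuous (𝓕 f) :=
    VectorFourier.fourierIntegral_continuous Real.continuous_fourierChar
      (by exact continuous_inner) hf
  have h2 : Continuous fun ξ : Eu n => 𝓕 f ((2 * Real.pi)⁻¹ • ξ) :=
    h𝓕.comp (continuous_const_smul _)
  have heq : FT f = fun ξ : Eu n => 𝓕 f ((2 * Real.pi)⁻¹ • ξ) :=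
    funext (FT_eq_fourierIntegral f)
  rw [heq]; exact h2

/-- If `g` is the (unnormalized) inverse Fourier integral of an integrable continuous `m`,
and `g` is itself integrable, then `FT g = (2π)^n m`. -/
lemma FT_of_inverse {n : ℕ} (m : Eu n → ℂ) (hm_cont : Continuous m) (hm_int : Integrable m)
    (g : Eu n → ℂ)
    (hgm : ∀ x : Eu n, g x = ∫ ξ : Eu n, Complex.exp (Complex.I * ((inner ℝ x ξ : ℝ) : ℂ)) * m ξ)
    (hg : Integrable g) (ξ₀ : Eu n) :
    FT g ξ₀ = (((2 * Real.pi) ^ n : ℝ) : ℂ) * m ξ₀ := by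
  have hπ : (0:ℝ) < 2 * Real.pi := by positivity
  set R : ℝ := -(2 * Real.pi) with hRdef
  have hR : R ≠ 0 := by rw [hRdef]; exact neg_ne_zero.2 (by positivity)
  have hWeq : ∀ x : Eu n, g x = 𝓕 m (R⁻¹ • x) := by
    intro x
    rw [hgm x, Real.fourier_eq']
    congr 1; ext ξ
    rw [smul_eq_mul]
    congr 1
    have h1 : -2 * Real.pi * (inner ℝ ξ (R⁻¹ • x) : ℝ) = (inner ℝ x ξ : ℝ) := by
      rw [real_inner_smul_right, real_inner_comm, hRdef]
      have hπ' : Real.pi ≠ 0 := Real.pi_ne_zero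
      field_simp
    rw [h1]
    ring
  have h1 : 𝓕 m = fun w => g (R • w) := by
    ext w
    rw [hWeq (R • w), smul_smul, inv_mul_cancel₀ hR, one_smul]
  have h2 : Integrable (𝓕 m) := by rw [h1]; exact hg.comp_smul hR
  have hinv : 𝓕⁻ (𝓕 m) ξ₀ = m ξ₀ := hm_int.fourierInv_fourier_eq h2 hm_cont.continuousAt
  set F : Eu n → ℂ :=
    fun x => Complex.exp (-Complex.I * ((inner ℝ x ξ₀ : ℝ) : ℂ)) * 𝓕 m (R⁻¹ • x) with hF
  have hFT : FT g ξ₀ = ∫ x, F x := by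
    unfold FT
    congr 1; ext x
    rw [hF, hWeq x]
  have hcomp : ∀ y : Eu n, F (R • y)
      = Complex.exp (((2 * Real.pi * (inner ℝ y ξ₀ : ℝ) : ℝ) : ℂ) * Complex.I) • 𝓕 m y := by
    intro y
    rw [hF]
    simp only
    rw [smul_smul, inv_mul_cancel₀ hR, one_smul, smul_eq_mul]
    congr 1
    have h3 : (inner ℝ (R • y) ξ₀ : ℝ) = R * (inner ℝ y ξ₀ : ℝ) := real_inner_smul_left _ _ _
    rw [h3, hRdef]
    push_cast
    ring
  have hval : ∫ x, F (R • x) = m ξ₀ := by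
    calc ∫ x, F (R • x)
        = ∫ y, Complex.exp (((2 * Real.pi * (inner ℝ y ξ₀ : ℝ) : ℝ) : ℂ) * Complex.I) • 𝓕 m y := by
          simp only [hcomp]
      _ = 𝓕⁻ (𝓕 m) ξ₀ := (Real.fourierInv_eq' (𝓕 m) ξ₀).symm
      _ = m ξ₀ := hinv
  have habs : |(R ^ Module.finrank ℝ (Eu n))⁻¹| = ((2 * Real.pi) ^ n)⁻¹ := by
    rw [finrank_euclideanSpace_fin, abs_inv, abs_pow, hRdef, abs_neg, abs_of_pos hπ]
  have hint2 : ∫ x, F (R • x) = (((2 * Real.pi) ^ n : ℝ))⁻¹ • ∫ x, F x := by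
    have hcv := MeasureTheory.Measure.integral_comp_smul volume F R
    rwa [habs] at hcv
  have hkey : (((2 * Real.pi) ^ n : ℝ))⁻¹ • ∫ x, F x = m ξ₀ := by rw [← hint2, hval]
  rw [hFT]
  calc (∫ x, F x)
      = ((2 * Real.pi) ^ n : ℝ) • ((((2 * Real.pi) ^ n : ℝ))⁻¹ • ∫ x, F x) := by
        rw [smul_smul, mul_inv_cancel₀ (by positivity), one_smul]
    _ = ((2 * Real.pi) ^ n : ℝ) • m ξ₀ := by rw [hkey]
    _ = (((2 * Real.pi) ^ n : ℝ) : ℂ) * m ξ₀ := by rw [Complex.real_smul]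

end Aux

/-- Dispersive decay estimates for the cosine-type frequency-localized propagator. -/
theorem Wop_dispersive_estimates
    (n : ℕ) (hn : 1 ≤ n) (β : ℝ → ℝ) (hβs : ContDiff ℝ (⊤ : ℕ∞) β)
    (hβ01 : ∀ x, 0 ≤ β x ∧ β x ≤ 1)
    (hβsupp : Function.support β ⊆ Icc (1/2 : ℝ) 2) :
    (∀ k : ℕ, (n : ℝ) / 2 < (k : ℝ) →
      ∃ C > 0, ∀ j : ℤ, -2 ≤ j → j ≤ 2 → ∀ t τ : ℝ, 0 ≤ t → 0 ≤ τ →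
        ∀ f : Eu n → ℂ, Integrable f →
          sobNorm n k (Wop β j t τ f)
            ≤ C * Real.exp (-(t + τ) / 16) * ∫ x : Eu n, ‖f x‖) ∧
    (∀ σ : ℝ, 0 < σ →
      ∃ C > 0, ∀ j : ℤ, -2 ≤ j → j ≤ 2 → ∀ t τ : ℝ, 0 ≤ t → 0 ≤ τ →
        ∀ f : Eu n → ℂ, Integrable f →
          eLpNorm (Wop β j t τ f) ∞ volume
            ≤ ENNReal.ofReal (C * (1 + |t - τ|) ^ (-σ) * ∫ x : Eu n, ‖f x‖)) := by
  have hπ : (0:ℝ) < 2 * Real.pi := by positivity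
  set vol8 : ℝ := (volume (Metric.closedBall (0 : Eu n) 8)).toReal with hvol8
  have hv8 : 0 ≤ vol8 := ENNReal.toReal_nonneg
  clear_value vol8
  have hind_int : ∀ c : ℝ, Integrable
      (Set.indicator (Metric.closedBall (0 : Eu n) 8) (fun _ => c)) := by
    intro c
    rw [integrable_indicator_iff measurableSet_closedBall]
    exact integrableOn_const measure_closedBall_lt_top.ne
  have hWsymb_c : ∀ j : ℤ, ∀ t τ : ℝ, Continuous fun r : ℝ => Wsymb β j t τ r := by
    intro j t τ
    have hβc : Continuous β := hβs.continuous
    unfold Wsymb aFun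
    fun_prop
  constructor
  · -- Sobolev estimate
    intro k hk
    refine ⟨Real.sqrt (vol8 * 65 ^ (k:ℝ)) * (2 * Real.pi) ^ n * 4 + 1, by positivity,
      fun j hj1 hj2 t τ ht hτ f hf => ?_⟩
    set D : ℝ := Real.sqrt (vol8 * 65 ^ (k:ℝ)) * (2 * Real.pi) ^ n * 4 with hD
    have hD0 : 0 ≤ D := by rw [hD]; positivity
    set A : ℝ := ∫ x : Eu n, ‖f x‖ with hA
    have hA0 : 0 ≤ A := integral_nonneg fun x => norm_nonneg _
    set e : ℝ := Real.exp (-(t + τ) / 16) with he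
    have he0 : 0 < e := Real.exp_pos _
    clear_value A
    set m : Eu n → ℂ := fun ξ => ((Wsymb β j t τ ‖ξ‖ : ℝ) : ℂ) * FT f ξ with hm
    set g : Eu n → ℂ := Wop β j t τ f with hgdef
    have hgm : ∀ x : Eu n, g x = ∫ ξ : Eu n,
        Complex.exp (Complex.I * ((inner ℝ x ξ : ℝ) : ℂ)) * m ξ := by
      intro x
      simp only [hgdef, Wop, hm, Wsymb, mul_assoc]
    have hm_cont : Continuous m := by
      rw [hm]
      exact (Complex.continuous_ofReal.comp ((hWsymb_c j t τ).comp continuous_norm)).mul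
        (FT_continuous hf)
    have hm0 : ∀ ξ : Eu n, ξ ∉ Metric.closedBall (0 : Eu n) 8 → m ξ = 0 := by
      intro ξ hξ
      have h8 : ¬ ‖ξ‖ ≤ 8 := by rwa [Metric.mem_closedBall, dist_zero_right] at hξ
      have hb : β (‖ξ‖ / 2 ^ j) = 0 := by
        by_contra hb
        exact h8 (supp_norm_bounds β hβsupp hj1 hj2 hb).2
      simp [hm, Wsymb, hb]
    have hm_int : Integrable m :=
      hm_cont.integrable_of_hasCompactSupport
        (HasCompactSupport.intro (isCompact_closedBall _ _) hm0)
    have hm_bd : ∀ ξ : Eu n, ‖m ξ‖ ≤ Set.indicator (Metric.closedBall (0 : Eu n) 8)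
        (fun _ => 4 * e * A) ξ := by
      intro ξ
      by_cases hmem : ξ ∈ Metric.closedBall (0 : Eu n) 8
      · rw [Set.indicator_of_mem hmem]
        have h1 : ‖m ξ‖ = |Wsymb β j t τ ‖ξ‖| * ‖FT f ξ‖ := by
          simp only [hm, norm_mul, Complex.norm_real, Real.norm_eq_abs]
        rw [h1]
        have h2 := Wsymb_abs_le β hβ01 hβsupp hj1 hj2 ht hτ ξ
        rw [Set.indicator_of_mem hmem] at h2
        have h3 : ‖FT f ξ‖ ≤ A := by rw [hA]; exact norm_FT_le f ξ
        calc |Wsymb β j t τ ‖ξ‖| * ‖FT f ξ‖ ≤ 4 * Real.exp (-(t + τ) / 16) * A :=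
              mul_le_mul h2 h3 (norm_nonneg _) (by positivity)
          _ = 4 * e * A := by rw [he]
      · rw [Set.indicator_of_notMem hmem, hm0 ξ hmem, norm_zero]
    by_cases hgint : Integrable g
    · have hFTg : ∀ ξ : Eu n, FT g ξ = (((2 * Real.pi) ^ n : ℝ) : ℂ) * m ξ :=
        FT_of_inverse m hm_cont hm_int g hgm hgint
      have hpt : ∀ ξ : Eu n, (1 + ‖ξ‖ ^ 2) ^ (k:ℝ) * ‖FT g ξ‖ ^ 2 ≤
          Set.indicator (Metric.closedBall (0 : Eu n) 8)
            (fun _ => (65:ℝ) ^ (k:ℝ) * ((2 * Real.pi) ^ n * (4 * e * A)) ^ 2) ξ := by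
        intro ξ
        by_cases hmem : ξ ∈ Metric.closedBall (0 : Eu n) 8
        · rw [Set.indicator_of_mem hmem]
          have hξ8 : ‖ξ‖ ≤ 8 := by rwa [Metric.mem_closedBall, dist_zero_right] at hmem
          have h1 : (1 + ‖ξ‖ ^ 2) ^ (k:ℝ) ≤ (65:ℝ) ^ (k:ℝ) :=
            Real.rpow_le_rpow (by positivity) (by nlinarith [norm_nonneg ξ]) (Nat.cast_nonneg k)
          have h2 : ‖FT g ξ‖ ≤ (2 * Real.pi) ^ n * (4 * e * A) := by
            rw [hFTg ξ, norm_mul]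
            have h3 : ‖(((2 * Real.pi) ^ n : ℝ) : ℂ)‖ = (2 * Real.pi) ^ n := by
              rw [Complex.norm_real, Real.norm_eq_abs, abs_of_pos (by positivity)]
            rw [h3]
            have h4 := hm_bd ξ
            rw [Set.indicator_of_mem hmem] at h4
            exact mul_le_mul_of_nonneg_left h4 (by positivity)
          exact mul_le_mul h1 (pow_le_pow_left₀ (norm_nonneg _) h2 2) (by positivity)
            (by positivity)
        · rw [Set.indicator_of_notMem hmem, hFTg ξ, hm0 ξ hmem, mul_zero, norm_zero]
          simp
      have hint_le : (∫ ξ : Eu n, (1 + ‖ξ‖ ^ 2) ^ (k:ℝ) * ‖FT g ξ‖ ^ 2) ≤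
          vol8 * ((65:ℝ) ^ (k:ℝ) * ((2 * Real.pi) ^ n * (4 * e * A)) ^ 2) := by
        refine le_trans (integral_mono_of_nonneg
          (Filter.Eventually.of_forall fun ξ => by positivity)
          (hind_int _) (Filter.Eventually.of_forall hpt)) ?_
        rw [integral_indicator_const _ measurableSet_closedBall, smul_eq_mul, measureReal_def, ← hvol8]
      have hsq : sobNormSq n k g ≤ (D * (e * A)) ^ 2 := by
        have hstep : sobNormSq n k g ≤ ((2 * Real.pi) ^ n)⁻¹ *
            (vol8 * ((65:ℝ) ^ (k:ℝ) * ((2 * Real.pi) ^ n * (4 * e * A)) ^ 2)) := by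
          unfold sobNormSq
          exact mul_le_mul_of_nonneg_left hint_le (by positivity)
        refine hstep.trans ?_
        have hinv1 : ((2 * Real.pi) ^ n : ℝ)⁻¹ ≤ 1 := by
          rw [inv_le_one_iff₀]
          right
          exact one_le_pow₀ (by nlinarith [Real.pi_gt_three])
        have hs : Real.sqrt (vol8 * 65 ^ (k:ℝ)) ^ 2 = vol8 * 65 ^ (k:ℝ) :=
          Real.sq_sqrt (by positivity)
        have hXeq : (D * (e * A)) ^ 2
            = vol8 * ((65:ℝ) ^ (k:ℝ) * ((2 * Real.pi) ^ n * (4 * e * A)) ^ 2) := by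
          have h1 : (D * (e * A)) ^ 2 = Real.sqrt (vol8 * 65 ^ (k:ℝ)) ^ 2
              * (((2 * Real.pi) ^ n) ^ 2 * (16 * (e * A) ^ 2)) := by
            rw [hD]; ring
          rw [h1, hs]; ring
        calc ((2 * Real.pi) ^ n : ℝ)⁻¹ *
            (vol8 * ((65:ℝ) ^ (k:ℝ) * ((2 * Real.pi) ^ n * (4 * e * A)) ^ 2))
            ≤ 1 * (vol8 * ((65:ℝ) ^ (k:ℝ) * ((2 * Real.pi) ^ n * (4 * e * A)) ^ 2)) :=
              mul_le_mul_of_nonneg_right hinv1 (by positivity)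
          _ = (D * (e * A)) ^ 2 := by rw [one_mul]; exact hXeq.symm
      have hfinal : sobNorm n k g ≤ D * (e * A) := by
        unfold sobNorm
        refine (Real.sqrt_le_sqrt hsq).trans ?_
        rw [Real.sqrt_sq (by positivity)]
      refine hfinal.trans ?_
      nlinarith [mul_nonneg he0.le hA0]
    · have hFT0 : ∀ ξ : Eu n, FT g ξ = 0 := by
        intro ξ
        unfold FT
        apply integral_undef
        intro hcon
        apply hgint
        have hmeas : AEStronglyMeasurable (fun x : Eu n =>
            Complex.exp (Complex.I * ((inner ℝ x ξ : ℝ) : ℂ))) volume :=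
          (Complex.continuous_exp.comp (continuous_const.mul
            (Complex.continuous_ofReal.comp
              (continuous_id.inner continuous_const)))).aestronglyMeasurable
        have h2 := hcon.bdd_mul (c := 1) hmeas (Filter.Eventually.of_forall fun x => le_of_eq (norm_exp_I_mul _))
        have h3 : (fun x : Eu n => Complex.exp (Complex.I * ((inner ℝ x ξ : ℝ) : ℂ)) *
            (Complex.exp (-Complex.I * ((inner ℝ x ξ : ℝ) : ℂ)) * g x)) = g := by
          funext x
          rw [← mul_assoc, ← Complex.exp_add]
          have h4 : Complex.I * ((inner ℝ x ξ : ℝ) : ℂ)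
              + -Complex.I * ((inner ℝ x ξ : ℝ) : ℂ) = 0 := by ring
          rw [h4, Complex.exp_zero, one_mul]
        rwa [h3] at h2
      have hzero : sobNormSq n k g = 0 := by
        unfold sobNormSq
        simp [hFT0]
      have hsn : sobNorm n k g = 0 := by unfold sobNorm; rw [hzero, Real.sqrt_zero]
      rw [hsn]
      have hDe : (0:ℝ) ≤ (D + 1) * e * A := by positivity
      linarith
  · -- dispersive L^∞ estimate
    intro σ hσ
    obtain ⟨K, hK, hKb⟩ := exists_decay_bound σ hσ
    refine ⟨4 * vol8 * K + 1, by positivity, fun j hj1 hj2 t τ ht hτ f hf => ?_⟩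
    set A : ℝ := ∫ x : Eu n, ‖f x‖ with hA
    have hA0 : 0 ≤ A := integral_nonneg fun x => norm_nonneg _
    clear_value A
    have hle2 : ∀ ξ : Eu n, |Wsymb β j t τ ‖ξ‖| * ‖FT f ξ‖ ≤
        Set.indicator (Metric.closedBall (0 : Eu n) 8)
          (fun _ => 4 * Real.exp (-(t + τ) / 16) * A) ξ := by
      intro ξ
      by_cases hmem : ξ ∈ Metric.closedBall (0 : Eu n) 8
      · rw [Set.indicator_of_mem hmem]
        have h2 := Wsymb_abs_le β hβ01 hβsupp hj1 hj2 ht hτ ξ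
        rw [Set.indicator_of_mem hmem] at h2
        have h3 : ‖FT f ξ‖ ≤ A := by rw [hA]; exact norm_FT_le f ξ
        exact mul_le_mul h2 h3 (norm_nonneg _) (by positivity)
      · rw [Set.indicator_of_notMem hmem]
        have h2 := Wsymb_abs_le β hβ01 hβsupp hj1 hj2 ht hτ ξ
        rw [Set.indicator_of_notMem hmem] at h2
        have h4 : Wsymb β j t τ ‖ξ‖ = 0 := abs_nonpos_iff.mp h2
        rw [h4, abs_zero, zero_mul]
    have hb : ∀ x : Eu n, ‖Wop β j t τ f x‖ ≤
        vol8 * (4 * Real.exp (-(t + τ) / 16) * A) := by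
      intro x
      have h0 : Wop β j t τ f x = ∫ ξ : Eu n,
          Complex.exp (Complex.I * ((inner ℝ x ξ : ℝ) : ℂ))
            * ((Wsymb β j t τ ‖ξ‖ : ℝ) : ℂ) * FT f ξ := rfl
      rw [h0]
      refine (norm_integral_le_integral_norm _).trans ?_
      have hle : ∀ ξ : Eu n, ‖Complex.exp (Complex.I * ((inner ℝ x ξ : ℝ) : ℂ))
          * ((Wsymb β j t τ ‖ξ‖ : ℝ) : ℂ) * FT f ξ‖ ≤
          Set.indicator (Metric.closedBall (0 : Eu n) 8)
            (fun _ => 4 * Real.exp (-(t + τ) / 16) * A) ξ := by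
        intro ξ
        rw [norm_mul, norm_mul, norm_exp_I_mul, one_mul, Complex.norm_real, Real.norm_eq_abs]
        exact hle2 ξ
      refine le_trans (integral_mono_of_nonneg
        (Filter.Eventually.of_forall fun ξ => norm_nonneg _)
        (hind_int _) (Filter.Eventually.of_forall hle)) ?_
      rw [integral_indicator_const _ measurableSet_closedBall, smul_eq_mul, measureReal_def, ← hvol8]
    have hEsup := MeasureTheory.eLpNorm_le_of_ae_bound (μ := volume) (p := (⊤ : ℝ≥0∞))
      (Filter.Eventually.of_forall hb)
    simp only [ENNReal.toReal_top, inv_zero, ENNReal.rpow_zero, one_mul] at hEsup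
    refine hEsup.trans (ENNReal.ofReal_le_ofReal ?_)
    have hu0 : (0:ℝ) ≤ |t - τ| := abs_nonneg _
    have hu2 : |t - τ| ≤ t + τ := abs_le.2 ⟨by linarith, by linarith⟩
    have hbase : (0:ℝ) < 1 + |t - τ| := by linarith
    have hP : (0:ℝ) < (1 + |t - τ|) ^ (-σ) := Real.rpow_pos_of_pos hbase _
    have hPσ : (0:ℝ) < (1 + |t - τ|) ^ σ := Real.rpow_pos_of_pos hbase _
    have he2 : Real.exp (-(t + τ) / 16) ≤ K * (1 + |t - τ|) ^ (-σ) := by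
      have h3 : Real.exp (-(t + τ) / 16) ≤ Real.exp (-|t - τ| / 16) :=
        Real.exp_le_exp.2 (by linarith)
      have h4 := hKb _ hu0
      rw [Real.rpow_neg hbase.le, ← div_eq_mul_inv, le_div_iff₀ hPσ]
      nlinarith [mul_le_mul_of_nonneg_right h3 hPσ.le]
    nlinarith [mul_le_mul_of_nonneg_left he2
        (mul_nonneg (mul_nonneg (by norm_num : (0:ℝ) ≤ 4) hv8) hA0),
      mul_nonneg hP.le hA0, hv8, hA0, hK.le]
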